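/- arXiv:2107.01835 — 5 statements merged into one kernel-verified Lean document; each statement's English description precedes it below -/
import Mathlib

section
/- For any cumulative distribution function F on [0,1] and values 0 < v1 < v2 < 1, any largest maximizer b*_{v1} of b ↦ (v1 - b)F(b) is at most any largest maximizer b*_{v2} of b ↦ (v2 - b)F(b). In other words, the map v ↦ b*_{v,F} (the largest maximizer of the first-price utility) is non-decreasing in v. -/
/-!
Revealed preference: if `b₂ < b₁` were optimal for `v₂ > v₁` and `v₁` respectively, adding the two
optimality inequalities gives `(v₂ - v₁) (F b₁ - F b₂) ≤ 0`, so `F b₁ = F b₂` by monotonicity.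
If this common value is positive, the lower bid `b₂` would earn strictly more than `b₁` at `v₁`;
if it is zero, `b₁` earns `0` like `b₂`, so it is an optimal bid at `v₂` above the largest one.
-/

open Set

section FirstPriceUtility

variable {F : ℝ → ℝ} {s : Set ℝ} {v v₁ v₂ b₁ b₂ : ℝ}

theorem apply_le_apply_of_isMaxOn_sub_mul (hv : v₁ < v₂) (hb₁ : b₁ ∈ s) (hb₂ : b₂ ∈ s)
    (h₁ : IsMaxOn (fun b => (v₁ - b) * F b) s b₁) (h₂ : IsMaxOn (fun b => (v₂ - b) * F b) s b₂) :
    F b₁ ≤ F b₂ := by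
  have hsum : (v₂ - v₁) * (F b₁ - F b₂) ≤ 0 := by
    have h₁₂ : (v₁ - b₂) * F b₂ ≤ (v₁ - b₁) * F b₁ := isMaxOn_iff.mp h₁ b₂ hb₂
    have h₂₁ : (v₂ - b₁) * F b₁ ≤ (v₂ - b₂) * F b₂ := isMaxOn_iff.mp h₂ b₁ hb₁
    linarith
  by_contra! hlt
  exact hsum.not_gt (mul_pos (sub_pos.mpr hv) (sub_pos.mpr hlt))

theorem le_of_isMaxOn_sub_mul_of_apply_eq (hpos : 0 < F b₂) (heq : F b₁ = F b₂) (hb₂ : b₂ ∈ s)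
    (h₁ : IsMaxOn (fun b => (v - b) * F b) s b₁) : b₁ ≤ b₂ := by
  have hval : (v - b₂) * F b₂ ≤ (v - b₁) * F b₁ := isMaxOn_iff.mp h₁ b₂ hb₂
  rw [heq] at hval
  linarith [le_of_mul_le_mul_right hval hpos]

end FirstPriceUtility

theorem largest_maximizer_monotone_general
    (F : ℝ → ℝ) (hFmono : MonotoneOn F (Icc 0 1))
    (hF01 : ∀ x ∈ Icc (0:ℝ) 1, F x ∈ Icc (0:ℝ) 1)
    (v₁ v₂ b₁ b₂ : ℝ) (hv₁₂ : v₁ < v₂)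
    (hb₁mem : b₁ ∈ Icc (0:ℝ) 1)
    (hb₁max : IsMaxOn (fun b => (v₁ - b) * F b) (Icc 0 1) b₁)
    (hb₂mem : b₂ ∈ Icc (0:ℝ) 1)
    (hb₂max : IsMaxOn (fun b => (v₂ - b) * F b) (Icc 0 1) b₂)
    (hb₂top : ∀ b ∈ Icc (0:ℝ) 1,
      IsMaxOn (fun b => (v₂ - b) * F b) (Icc 0 1) b → b ≤ b₂) :
    b₁ ≤ b₂ := by
  by_contra! hlt
  have heq : F b₁ = F b₂ := le_antisymm
    (apply_le_apply_of_isMaxOn_sub_mul hv₁₂ hb₁mem hb₂mem hb₁max hb₂max)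
    (hFmono hb₂mem hb₁mem hlt.le)
  rcases (hF01 b₂ hb₂mem).1.lt_or_eq with hpos | hzero
  · exact hlt.not_ge (le_of_isMaxOn_sub_mul_of_apply_eq hpos heq hb₂mem hb₁max)
  · have hb₁max₂ : IsMaxOn (fun b => (v₂ - b) * F b) (Icc 0 1) b₁ :=
      isMaxOn_iff.mpr fun x hx =>
        (isMaxOn_iff.mp hb₂max x hx).trans_eq (by rw [heq, ← hzero, mul_zero, mul_zero])
    exact hlt.not_ge (hb₂top b₁ hb₁mem hb₁max₂)

/-- monotonicity of the largest maximizer of the first-price utility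
`b ↦ (v - b) * F b` in the value `v`. -/
theorem largest_maximizer_monotone
    (F : ℝ → ℝ) (hFmono : MonotoneOn F (Icc 0 1))
    (hF01 : ∀ x ∈ Icc (0:ℝ) 1, F x ∈ Icc (0:ℝ) 1)
    (v₁ v₂ b₁ b₂ : ℝ) (hv₁ : 0 < v₁) (hv₁₂ : v₁ < v₂) (hv₂ : v₂ < 1)
    (hb₁mem : b₁ ∈ Icc (0:ℝ) 1)
    (hb₁max : IsMaxOn (fun b => (v₁ - b) * F b) (Icc 0 1) b₁)
    (hb₁top : ∀ b ∈ Icc (0:ℝ) 1,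
      IsMaxOn (fun b => (v₁ - b) * F b) (Icc 0 1) b → b ≤ b₁)
    (hb₂mem : b₂ ∈ Icc (0:ℝ) 1)
    (hb₂max : IsMaxOn (fun b => (v₂ - b) * F b) (Icc 0 1) b₂)
    (hb₂top : ∀ b ∈ Icc (0:ℝ) 1,
      IsMaxOn (fun b => (v₂ - b) * F b) (Icc 0 1) b → b ≤ b₂) :
    b₁ ≤ b₂ :=
  largest_maximizer_monotone_general F hFmono hF01 v₁ v₂ b₁ b₂ hv₁₂ hb₁mem hb₁max hb₂mem hb₂max
    hb₂top
end

section
/- If F : [0,1] → [0,1] is continuously differentiable with derivative f, strictly log-concave (i.e., f/F is strictly decreasing on (0,1)), and f does not vanish on (0,1), then for any v ∈ [0,1] the function b ↦ (v - b)F(b) has a unique maximizer on [0,1]. -/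
/-!
By Darboux's theorem a derivative that does not vanish on `(0,1)` has constant sign there, and
`F 0 < F 1` forces it to be positive, so `F > 0` on `(0,1]`. For `v = 0` the utility `-b F(b)`
is negative except at `b = 0`. For `v > 0` the utility is positive at `v / 2`, so every maximizer
`b` is interior with `b < v` and `F b > 0`, and satisfies the first-order condition
`f b / F b = 1 / (v - b)`. The left side is strictly decreasing and the right side strictly
increasing in `b`, so they cross at most once.
-/

open Set

theorem strictMonoOn_of_hasDerivAt_ne_zero {F f : ℝ → ℝ} {a b : ℝ} (hab : a < b)
    (hFab : F a ≤ F b) (hF : ContinuousOn F (Icc a b))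
    (hderiv : ∀ x ∈ Ioo a b, HasDerivAt F (f x) x) (hne : ∀ x ∈ Ioo a b, f x ≠ 0) :
    StrictMonoOn F (Icc a b) := by
  have hpos : ∀ x ∈ Ioo a b, 0 < f x := by
    refine (hasDerivWithinAt_forall_lt_or_forall_gt_of_forall_ne (convex_Ioo a b)
      (fun x hx => (hderiv x hx).hasDerivWithinAt) hne).resolve_left fun hneg => ?_
    obtain ⟨c, hc, hslope⟩ := exists_hasDerivAt_eq_slope F f hab hF hderiv
    have : 0 ≤ (F b - F a) / (b - a) := div_nonneg (sub_nonneg.2 hFab) (sub_nonneg.2 hab.le)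
    linarith [hneg c hc]
  rw [← interior_Icc] at hderiv hpos
  exact strictMonoOn_of_hasDerivWithinAt_pos (convex_Icc a b) hF
    (fun x hx => (hderiv x hx).hasDerivWithinAt) hpos

theorem StrictAntiOn.subsingleton_setOf_eq {g h : ℝ → ℝ} {s : Set ℝ} (hg : StrictAntiOn g s)
    (hh : StrictMonoOn h s) : {x ∈ s | g x = h x}.Subsingleton := by
  have key : ∀ x ∈ {x ∈ s | g x = h x}, ∀ y ∈ {x ∈ s | g x = h x}, ¬ x < y :=
    fun x ⟨hx, hgx⟩ y ⟨hy, hgy⟩ hxy => by linarith [hg hx hy hxy, hh hx hy hxy]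
  intro x hx y hy
  exact le_antisymm (not_lt.1 (key y hy x hx)) (not_lt.1 (key x hx y hy))

section FirstPriceUtility

variable {F f : ℝ → ℝ} {v b : ℝ}

theorem sub_mul_eq_of_isLocalMax_utility (hF : HasDerivAt F (f b) b)
    (hmax : IsLocalMax (fun b => (v - b) * F b) b) : (v - b) * f b = F b := by
  have := hmax.hasDerivAt_eq_zero (((hasDerivAt_id' b).const_sub v).mul hF)
  linarith

theorem eq_zero_of_isMaxOn_utility (hv : v ≤ 0) (hF0 : F 0 = 0)
    (hFpos : ∀ x ∈ Ioc (0 : ℝ) 1, 0 < F x) (hb : b ∈ Icc (0 : ℝ) 1)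
    (hmax : IsMaxOn (fun b => (v - b) * F b) (Icc 0 1) b) : b = 0 := by
  by_contra hne
  have hb0 : 0 < b := hb.1.lt_of_ne' hne
  have h0 := isMaxOn_iff.1 hmax 0 (left_mem_Icc.2 zero_le_one)
  simp only [hF0, mul_zero] at h0
  nlinarith [hFpos b ⟨hb0, hb.2⟩]

theorem mem_Ioo_of_isMaxOn_utility (hv : v ∈ Ioc (0 : ℝ) 1) (hF0 : F 0 = 0)
    (hFpos : ∀ x ∈ Ioc (0 : ℝ) 1, 0 < F x) (hb : b ∈ Icc (0 : ℝ) 1)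
    (hmax : IsMaxOn (fun b => (v - b) * F b) (Icc 0 1) b) : b ∈ Ioo 0 v ∧ 0 < F b := by
  have hhalf : v / 2 ∈ Ioc (0 : ℝ) 1 := ⟨by linarith [hv.1], by linarith [hv.2]⟩
  have hUb : 0 < (v - b) * F b := by
    have := isMaxOn_iff.1 hmax (v / 2) (Ioc_subset_Icc_self hhalf)
    nlinarith [hFpos _ hhalf, hv.1]
  have hFb : 0 ≤ F b := by
    rcases hb.1.eq_or_lt with rfl | hb0
    · exact hF0.ge
    · exact (hFpos b ⟨hb0, hb.2⟩).le
  have hvb : b < v := by nlinarith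
  have hFb : 0 < F b := pos_of_mul_pos_right hUb (by linarith)
  refine ⟨⟨hb.1.lt_of_ne ?_, hvb⟩, hFb⟩
  rintro rfl
  exact hFb.ne' hF0

end FirstPriceUtility

theorem unique_maximizer_of_strict_logconcave_general
    (F f : ℝ → ℝ)
    (hderiv : ∀ x ∈ Icc (0:ℝ) 1, HasDerivAt F (f x) x)
    (hF0 : F 0 = 0) (hF1 : F 1 = 1)
    (hlogconcave : StrictAntiOn (fun x => f x / F x) (Ioo 0 1))
    (hfne : ∀ x ∈ Ioo (0:ℝ) 1, f x ≠ 0)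
    (v : ℝ) (hv : v ∈ Icc (0:ℝ) 1) :
    ∃! b, b ∈ Icc (0:ℝ) 1 ∧ IsMaxOn (fun b => (v - b) * F b) (Icc 0 1) b := by
  have hFcont : ContinuousOn F (Icc 0 1) := fun x hx =>
    (hderiv x hx).continuousAt.continuousWithinAt
  have hFmono := strictMonoOn_of_hasDerivAt_ne_zero one_pos (by rw [hF0, hF1]; exact zero_le_one)
    hFcont (fun x hx => hderiv x (Ioo_subset_Icc_self hx)) hfne
  have hFpos : ∀ x ∈ Ioc (0 : ℝ) 1, 0 < F x := fun x hx =>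
    hF0 ▸ hFmono (left_mem_Icc.2 zero_le_one) (Ioc_subset_Icc_self hx) hx.1
  obtain ⟨b₀, hb₀, hmax₀⟩ := isCompact_Icc.exists_isMaxOn (nonempty_Icc.2 zero_le_one)
    ((continuousOn_const.sub continuousOn_id).mul hFcont)
  refine ⟨b₀, ⟨hb₀, hmax₀⟩, fun b ⟨hb, hmax⟩ => ?_⟩
  rcases hv.1.eq_or_lt with rfl | hv0
  · rw [eq_zero_of_isMaxOn_utility le_rfl hF0 hFpos hb hmax,
      eq_zero_of_isMaxOn_utility le_rfl hF0 hFpos hb₀ hmax₀]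
  have hcritical : ∀ b ∈ Icc (0 : ℝ) 1, IsMaxOn (fun b => (v - b) * F b) (Icc 0 1) b →
      b ∈ {b ∈ Ioo 0 v | f b / F b = (v - b)⁻¹} := by
    intro b hb hmax
    obtain ⟨hbv, hFb⟩ := mem_Ioo_of_isMaxOn_utility ⟨hv0, hv.2⟩ hF0 hFpos hb hmax
    have hloc := hmax.isLocalMax (Icc_mem_nhds hbv.1 (hbv.2.trans_le hv.2))
    have hfoc := sub_mul_eq_of_isLocalMax_utility (hderiv b hb) hloc
    refine ⟨hbv, ?_⟩
    rw [div_eq_iff hFb.ne', ← hfoc, inv_mul_cancel_left₀ (sub_ne_zero.2 hbv.2.ne')]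
  have hinv : StrictMonoOn (fun b => (v - b)⁻¹) (Ioo 0 v) := fun x hx y hy hxy =>
    inv_strictAntiOn (sub_pos.2 hy.2) (sub_pos.2 hx.2) (by linarith)
  exact (hlogconcave.mono (Ioo_subset_Ioo_right hv.2)).subsingleton_setOf_eq hinv
    (hcritical b hb hmax) (hcritical b₀ hb₀ hmax₀)

/-- if `F` is a continuously differentiable CDF on `[0,1]` with density `f`,
strictly log-concave (`f / F` strictly decreasing on `(0,1)`) and `f` not vanishing on
`(0,1)`, then for every `v ∈ [0,1]` the first-price utility `b ↦ (v - b) * F b`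
has a unique maximizer on `[0,1]`. -/
theorem unique_maximizer_of_strict_logconcave
    (F f : ℝ → ℝ)
    (hderiv : ∀ x ∈ Icc (0:ℝ) 1, HasDerivAt F (f x) x)
    (hfcont : ContinuousOn f (Icc 0 1))
    (hF0 : F 0 = 0) (hF1 : F 1 = 1)
    (hF01 : ∀ x ∈ Icc (0:ℝ) 1, F x ∈ Icc (0:ℝ) 1)
    (hlogconcave : StrictAntiOn (fun x => f x / F x) (Ioo 0 1))
    (hfne : ∀ x ∈ Ioo (0:ℝ) 1, f x ≠ 0)
    (v : ℝ) (hv : v ∈ Icc (0:ℝ) 1) :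
    ∃! b, b ∈ Icc (0:ℝ) 1 ∧ IsMaxOn (fun b => (v - b) * F b) (Icc 0 1) b :=
  unique_maximizer_of_strict_logconcave_general F f hderiv hF0 hF1 hlogconcave hfne v hv
end

section
/- If F is a continuously differentiable CDF on [0,1] with density f such that f/F is decreasing on (0,1), and b* is the maximizer of b ↦ (v-b)F(b) (satisfying (v - b*)f(b*) = F(b*) with b* < v), then F(b*) ≥ F(v)/e. -/
open Set Filter Topology

/-! The first-order condition says that `(log F)' = f / F` equals `k = 1 / (v - b*)` at `b*`;
since `f / F` is decreasing, `(log F)' ≤ k` on `[b*, v]` wherever `F > 0`. Integrating over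
`[b*, v]` gives `F v ≤ F b* · e`. To avoid dividing by `F` where it might vanish, the integration
is a fencing argument comparing `F` with `F b* · exp ((k + ε) (x - b*))` and letting `ε → 0`. -/

theorem le_mul_exp_of_deriv_le_mul {F f : ℝ → ℝ} {a b k : ℝ}
    (hF : ContinuousOn F (Icc a b)) (hf : ∀ x ∈ Ico a b, HasDerivWithinAt F (f x) (Ici x) x)
    (ha : 0 < F a) (bound : ∀ x ∈ Ico a b, 0 < F x → f x ≤ k * F x) :
    ∀ x ∈ Icc a b, F x ≤ F a * Real.exp (k * (x - a)) := by
  have strict : ∀ ε > 0, ∀ x ∈ Icc a b, F x ≤ F a * Real.exp ((k + ε) * (x - a)) := by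
    intro ε hε
    have hB : ∀ x, HasDerivAt (fun x => F a * Real.exp ((k + ε) * (x - a)))
        ((k + ε) * (F a * Real.exp ((k + ε) * (x - a)))) x := fun x => by
      simpa [mul_comm, mul_left_comm, mul_assoc] using
        ((((hasDerivAt_id x).sub_const a).const_mul (k + ε)).exp).const_mul (F a)
    refine image_le_of_deriv_right_lt_deriv_boundary hF hf (by simp) hB ?_
    intro x hx hFB
    have hBpos : 0 < F a * Real.exp ((k + ε) * (x - a)) := by positivity
    calc f x ≤ k * F x := bound x hx (hFB ▸ hBpos)
      _ < (k + ε) * (F a * Real.exp ((k + ε) * (x - a))) := by rw [hFB]; nlinarith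
  intro x hx
  have hlim : Tendsto (fun ε => F a * Real.exp ((k + ε) * (x - a))) (𝓝[>] 0)
      (𝓝 (F a * Real.exp (k * (x - a)))) :=
    tendsto_nhdsWithin_of_tendsto_nhds (by
      simpa using ((by fun_prop : Continuous fun ε : ℝ =>
        F a * Real.exp ((k + ε) * (x - a)))).tendsto 0)
  exact ge_of_tendsto hlim (eventually_nhdsWithin_of_forall fun ε hε => strict ε hε x hx)

theorem winning_rate_at_optimum_general
    (F f : ℝ → ℝ)
    (hderiv : ∀ x ∈ Icc (0:ℝ) 1, HasDerivAt F (f x) x)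
    (hantitone : AntitoneOn (fun x => f x / F x) (Ioo 0 1))
    (v bs : ℝ) (hv : v ∈ Icc (0:ℝ) 1) (hbs : bs ∈ Ioo 0 v)
    (hFbs : 0 < F bs)
    (hfoc : (v - bs) * f bs = F bs) :
    F bs ≥ F v / Real.exp 1 := by
  obtain ⟨hbs0, hbsv⟩ := hbs
  have hgap : 0 < v - bs := sub_pos.2 hbsv
  have hsub : Icc bs v ⊆ Icc 0 1 := Icc_subset_Icc hbs0.le hv.2
  have hrate : f bs / F bs = (v - bs)⁻¹ := by
    field_simp
    linarith
  have bound : ∀ x ∈ Ico bs v, 0 < F x → f x ≤ (v - bs)⁻¹ * F x := by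
    intro x hx hFx
    rw [← hrate, ← div_le_iff₀ hFx]
    exact hantitone ⟨hbs0, hbsv.trans_le hv.2⟩ ⟨hbs0.trans_le hx.1, hx.2.trans_le hv.2⟩ hx.1
  have hgrowth := le_mul_exp_of_deriv_le_mul
    (fun x hx => (hderiv x (hsub hx)).continuousAt.continuousWithinAt)
    (fun x hx => (hderiv x (hsub (Ico_subset_Icc_self hx))).hasDerivWithinAt)
    hFbs bound v ⟨hbsv.le, le_rfl⟩
  rw [inv_mul_cancel₀ hgap.ne'] at hgrowth
  exact (div_le_iff₀ (Real.exp_pos 1)).2 hgrowth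

/-- if `F` is a continuously differentiable CDF with density `f` such that
`f / F` is decreasing on `(0,1)`, and `b*` is the maximizer of `b ↦ (v - b) * F b`,
satisfying the first-order condition `(v - b*) * f b* = F b*` with `0 < b* < v`, then
`F b* ≥ F v / e`. -/
theorem winning_rate_at_optimum
    (F f : ℝ → ℝ)
    (hderiv : ∀ x ∈ Icc (0:ℝ) 1, HasDerivAt F (f x) x)
    (hfcont : ContinuousOn f (Icc 0 1))
    (hF0 : F 0 = 0) (hF1 : F 1 = 1)
    (hantitone : AntitoneOn (fun x => f x / F x) (Ioo 0 1))
    (v bs : ℝ) (hv : v ∈ Icc (0:ℝ) 1) (hbs : bs ∈ Ioo 0 v)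
    (hFbs : 0 < F bs)
    (hmax : IsMaxOn (fun b => (v - b) * F b) (Icc 0 1) bs)
    (hfoc : (v - bs) * f bs = F bs) :
    F bs ≥ F v / Real.exp 1 :=
  winning_rate_at_optimum_general F f hderiv hantitone v bs hv hbs hFbs hfoc
end

section
/- Let F be a continuously differentiable, strictly log-concave CDF on [0,1] with density f not vanishing on (0,1), so F is increasing with inverse F^{-1}. Define W_{v,F}(q) = (v - F^{-1}(q))·q for q ∈ [0,1] and let q* be its maximizer. Then for every q ∈ [0,1], W_{v,F}(q*) − W_{v,F}(q) ≥ (1/4)·(q* − q)²·W_{v,F}(q*). -/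
/-!
Write `s = v - F⁻¹ q*`. At the interior maximiser the first-order condition reads `f / F = 1 / s`
at `F⁻¹ q*`, so the tangent line of the concave function `log F` there gives
`v - F⁻¹ q ≤ s (1 - log (q / q*))`, i.e. `W q* - W q ≥ s (q* - q + q log (q / q*))`.
Applying `log t ≥ 1 - 1 / t` at `t = √(q / q*)` bounds the bracket below by `(√q* - √q)²`, and
`(q* - q)² q* ≤ 4 (√q* - √q)²` on `[0, 1]`. When `W q ≤ 0` the bound is immediate from
`(q* - q)² ≤ 1`.
-/

open Set Real

lemma le_add_mul_sub_of_hasDerivAt_of_antitoneOn {g g' : ℝ → ℝ} {s : Set ℝ} (hs : Convex ℝ s)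
    (hso : IsOpen s) (hg : ∀ x ∈ s, HasDerivAt g (g' x) x) (hg' : AntitoneOn g' s) {a b : ℝ}
    (ha : a ∈ s) (hb : b ∈ s) : g b ≤ g a + g' a * (b - a) := by
  have hderiv : s.EqOn (deriv g) g' := fun x hx => (hg x hx).deriv
  have hconc : ConcaveOn ℝ s g := by
    refine AntitoneOn.concaveOn_of_deriv hs (fun x hx => (hg x hx).continuousAt.continuousWithinAt)
      ?_ ?_ <;> rw [hso.interior_eq]
    · exact fun x hx => (hg x hx).differentiableAt.differentiableWithinAt
    · exact hg'.congr hderiv.symm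
  rcases lt_trichotomy a b with hab | rfl | hba
  · have h := hconc.slope_le_of_hasDerivAt ha hb hab (hg a ha)
    rw [slope_def_field, div_le_iff₀ (sub_pos.2 hab)] at h
    linarith
  · simp
  · have h := hconc.le_slope_of_hasDerivAt hb ha hba (hg a ha)
    rw [slope_def_field, le_div_iff₀ (sub_pos.2 hba)] at h
    linarith

lemma sq_sqrt_sub_sqrt_le_sub_add_mul_log_div {x y : ℝ} (hx : 0 < x) (hy : 0 < y) :
    (√x - √y) ^ 2 ≤ x - y + y * log (y / x) := by
  obtain ⟨a, ha, rfl⟩ : ∃ a, 0 < a ∧ a ^ 2 = x := ⟨√x, sqrt_pos.2 hx, sq_sqrt hx.le⟩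
  obtain ⟨b, hb, rfl⟩ : ∃ b, 0 < b ∧ b ^ 2 = y := ⟨√y, sqrt_pos.2 hy, sq_sqrt hy.le⟩
  have hlog : 1 - a / b ≤ log (b / a) := by
    simpa only [inv_div] using one_sub_inv_le_log_of_pos (div_pos hb ha)
  have hb2 : b ^ 2 * (1 - a / b) = b ^ 2 - a * b := by field_simp
  rw [sqrt_sq ha.le, sqrt_sq hb.le, ← div_pow, log_pow]
  nlinarith [mul_le_mul_of_nonneg_left hlog (sq_nonneg b)]

lemma sq_sub_mul_le_four_mul_sq_sqrt_sub_sqrt {x y : ℝ} (hx : x ∈ Icc (0 : ℝ) 1)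
    (hy : y ∈ Icc (0 : ℝ) 1) : (x - y) ^ 2 * x ≤ 4 * (√x - √y) ^ 2 := by
  obtain ⟨a, ⟨ha0, ha1⟩, rfl⟩ : ∃ a ∈ Icc (0 : ℝ) 1, a ^ 2 = x :=
    ⟨√x, ⟨sqrt_nonneg x, sqrt_le_one.2 hx.2⟩, sq_sqrt hx.1⟩
  obtain ⟨b, ⟨hb0, hb1⟩, rfl⟩ : ∃ b ∈ Icc (0 : ℝ) 1, b ^ 2 = y :=
    ⟨√y, ⟨sqrt_nonneg y, sqrt_le_one.2 hy.2⟩, sq_sqrt hy.1⟩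
  have h : a * (a + b) ≤ 2 := by nlinarith
  rw [sqrt_sq ha0, sqrt_sq hb0]
  calc (a ^ 2 - b ^ 2) ^ 2 * a ^ 2 = (a - b) ^ 2 * (a * (a + b)) ^ 2 := by ring
    _ ≤ (a - b) ^ 2 * 2 ^ 2 := by gcongr
    _ = 4 * (a - b) ^ 2 := by ring

lemma utility_le_of_isLocalMax_of_antitoneOn {F f : ℝ → ℝ} {s : Set ℝ} (hs : Convex ℝ s)
    (hso : IsOpen s) (hderiv : ∀ x ∈ s, HasDerivAt F (f x) x) (hpos : ∀ x ∈ s, 0 < F x)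
    (hanti : AntitoneOn (fun x => f x / F x) s) {v bs b : ℝ} (hbs : bs ∈ s)
    (hmax : IsLocalMax (fun x => (v - x) * F x) bs) (hvbs : 0 < v - bs) (hb : b ∈ s) :
    (v - b) * F b ≤ (v - bs) * (F b - F b * log (F b / F bs)) := by
  have hfoc : F bs = (v - bs) * f bs := by
    have h := hmax.hasDerivAt_eq_zero (((hasDerivAt_id bs).const_sub v).mul (hderiv bs hbs))
    simp only [id_eq] at h
    linarith
  have hslope : f bs / F bs = (v - bs)⁻¹ := by
    have hf : f bs ≠ 0 := fun h => (hpos bs hbs).ne' (by rw [hfoc, h, mul_zero])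
    rw [hfoc]
    field_simp
  have htangent := le_add_mul_sub_of_hasDerivAt_of_antitoneOn hs hso
    (fun x hx => (hderiv x hx).log (hpos x hx).ne') hanti hbs hb
  have hlog : (v - bs) * log (F b / F bs) ≤ b - bs := by
    rw [log_div (hpos b hb).ne' (hpos bs hbs).ne']
    calc (v - bs) * (log (F b) - log (F bs)) ≤ (v - bs) * ((v - bs)⁻¹ * (b - bs)) := by
          gcongr; simp only [hslope] at htangent; linarith
      _ = b - bs := by field_simp
  calc (v - b) * F b ≤ ((v - bs) - (v - bs) * log (F b / F bs)) * F b :=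
        mul_le_mul_of_nonneg_right (by linarith) (hpos b hb).le
    _ = (v - bs) * (F b - F b * log (F b / F bs)) := by ring

lemma quantile_utility_le_of_isMaxOn {F f Finv : ℝ → ℝ}
    (hderiv : ∀ x ∈ Icc (0:ℝ) 1, HasDerivAt F (f x) x) (hF0 : F 0 = 0) (hF1 : F 1 = 1)
    (hlogconcave : AntitoneOn (fun x => f x / F x) (Ioo 0 1))
    (hFinv : ∀ q ∈ Icc (0:ℝ) 1, Finv q ∈ Icc (0:ℝ) 1 ∧ F (Finv q) = q)
    (hFinv' : ∀ x ∈ Icc (0:ℝ) 1, Finv (F x) = x) {v qs q : ℝ} (hqs : qs ∈ Ioo (0:ℝ) 1)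
    (hvqs : Finv qs < v) (hqsmax : IsMaxOn (fun q => (v - Finv q) * q) (Icc 0 1) qs)
    (hq : q ∈ Ioo (0:ℝ) 1) :
    (v - Finv q) * q ≤ (v - Finv qs) * (q - q * log (q / qs)) := by
  have hFmono : StrictMonoOn F (Icc 0 1) :=
    ContinuousOn.strictMonoOn_of_injOn_Icc zero_le_one (by simp [hF0, hF1])
      (fun x hx => (hderiv x hx).continuousAt.continuousWithinAt)
      (fun x hx y hy h => by rw [← hFinv' x hx, ← hFinv' y hy, h])
  have h0 : (0:ℝ) ∈ Icc (0:ℝ) 1 := left_mem_Icc.2 zero_le_one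
  have h1 : (1:ℝ) ∈ Icc (0:ℝ) 1 := right_mem_Icc.2 zero_le_one
  have hFmaps : MapsTo F (Icc 0 1) (Icc 0 1) := fun x hx =>
    ⟨hF0 ▸ hFmono.monotoneOn h0 hx hx.1, hF1 ▸ hFmono.monotoneOn hx h1 hx.2⟩
  have hFpos : ∀ x ∈ Ioo (0:ℝ) 1, 0 < F x := fun x hx =>
    hF0 ▸ hFmono h0 (Ioo_subset_Icc_self hx) hx.1
  have hFinv_Ioo : ∀ r ∈ Ioo (0:ℝ) 1, Finv r ∈ Ioo (0:ℝ) 1 := by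
    intro r hr
    obtain ⟨⟨hb0, hb1⟩, hFb⟩ := hFinv r (Ioo_subset_Icc_self hr)
    refine ⟨hb0.lt_of_ne ?_, hb1.lt_of_ne ?_⟩ <;> rintro h
    · rw [← h, hF0] at hFb; exact hr.1.ne hFb
    · rw [h, hF1] at hFb; exact hr.2.ne' hFb
  have hUmax : IsLocalMax (fun x => (v - x) * F x) (Finv qs) := by
    refine IsMaxOn.isLocalMax (s := Icc 0 1) (fun x hx => ?_)
      (Icc_mem_nhds (hFinv_Ioo qs hqs).1 (hFinv_Ioo qs hqs).2)
    simpa only [mem_ofPred_eq, hFinv' x hx, (hFinv qs (Ioo_subset_Icc_self hqs)).2]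
      using hqsmax (hFmaps hx)
  simpa only [(hFinv q (Ioo_subset_Icc_self hq)).2, (hFinv qs (Ioo_subset_Icc_self hqs)).2]
    using utility_le_of_isLocalMax_of_antitoneOn (convex_Ioo 0 1) isOpen_Ioo
      (fun x hx => hderiv x (Ioo_subset_Icc_self hx)) hFpos hlogconcave (hFinv_Ioo qs hqs) hUmax
      (sub_pos.2 hvqs) (hFinv_Ioo q hq)

theorem quantile_utility_quadratic_lower_bound_general
    (F f Finv : ℝ → ℝ)
    (hderiv : ∀ x ∈ Icc (0:ℝ) 1, HasDerivAt F (f x) x)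
    (hF0 : F 0 = 0) (hF1 : F 1 = 1)
    (hlogconcave : StrictAntiOn (fun x => f x / F x) (Ioo 0 1))
    (hFinv : ∀ q ∈ Icc (0:ℝ) 1, Finv q ∈ Icc (0:ℝ) 1 ∧ F (Finv q) = q)
    (hFinv' : ∀ x ∈ Icc (0:ℝ) 1, Finv (F x) = x)
    (v : ℝ) (hv : v ∈ Icc (0:ℝ) 1)
    (qs : ℝ) (hqs : qs ∈ Icc (0:ℝ) 1)
    (hqsmax : IsMaxOn (fun q => (v - Finv q) * q) (Icc 0 1) qs) :
    ∀ q ∈ Icc (0:ℝ) 1,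
      (v - Finv qs) * qs - (v - Finv q) * q ≥
        (1 / 4) * (qs - q) ^ 2 * ((v - Finv qs) * qs) := by
  intro q hq
  have hmax : ∀ r ∈ Icc (0:ℝ) 1, (v - Finv r) * r ≤ (v - Finv qs) * qs := fun r hr => hqsmax hr
  have hWqs : 0 ≤ (v - Finv qs) * qs := by simpa using hmax 0 (left_mem_Icc.2 zero_le_one)
  rcases le_or_gt ((v - Finv q) * q) 0 with hWq | hWq
  · have : (qs - q) ^ 2 ≤ 1 := by nlinarith [hq.1, hq.2, hqs.1, hqs.2]
    nlinarith
  have hFinv1 : Finv 1 = 1 := by simpa [hF1] using hFinv' 1 (right_mem_Icc.2 zero_le_one)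
  have hinterior : ∀ r ∈ Icc (0:ℝ) 1, 0 < (v - Finv r) * r → r ∈ Ioo (0:ℝ) 1 ∧ Finv r < v := by
    intro r hr hWr
    have hr0 : r ≠ 0 := by rintro rfl; simp at hWr
    have hr1 : r ≠ 1 := by rintro rfl; rw [hFinv1] at hWr; linarith [hv.2]
    exact ⟨⟨hr.1.lt_of_ne' hr0, hr.2.lt_of_ne hr1⟩, sub_pos.1 (pos_of_mul_pos_left hWr hr.1)⟩
  obtain ⟨hq', -⟩ := hinterior q hq hWq
  obtain ⟨hqs', hvqs⟩ := hinterior qs hqs (hWq.trans_le (hmax q hq))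
  have hgap := quantile_utility_le_of_isMaxOn hderiv hF0 hF1 hlogconcave.antitoneOn hFinv hFinv'
    hqs' hvqs hqsmax hq'
  have hlog := sq_sqrt_sub_sqrt_le_sub_add_mul_log_div hqs'.1 hq'.1
  have hsq := sq_sub_mul_le_four_mul_sq_sqrt_sub_sqrt hqs hq
  have hs : 0 ≤ v - Finv qs := (sub_pos.2 hvqs).le
  calc (1 / 4) * (qs - q) ^ 2 * ((v - Finv qs) * qs)
      = (v - Finv qs) * ((qs - q) ^ 2 * qs / 4) := by ring
    _ ≤ (v - Finv qs) * (qs - q + q * log (q / qs)) := by gcongr; linarith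
    _ ≤ (v - Finv qs) * qs - (v - Finv q) * q := by linarith

/-- under strict log-concavity of the CDF `F` (with non-vanishing density),
the utility expressed in quantile space, `W q = (v - F⁻¹ q) * q`, deviates from its
maximum at least quadratically: `W q* - W q ≥ (1/4) * (q* - q)^2 * W q*`. -/
theorem quantile_utility_quadratic_lower_bound
    (F f Finv : ℝ → ℝ)
    (hderiv : ∀ x ∈ Icc (0:ℝ) 1, HasDerivAt F (f x) x)
    (hfcont : ContinuousOn f (Icc 0 1))
    (hF0 : F 0 = 0) (hF1 : F 1 = 1)
    (hlogconcave : StrictAntiOn (fun x => f x / F x) (Ioo 0 1))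
    (hfne : ∀ x ∈ Ioo (0:ℝ) 1, f x ≠ 0)
    (hFinv : ∀ q ∈ Icc (0:ℝ) 1, Finv q ∈ Icc (0:ℝ) 1 ∧ F (Finv q) = q)
    (hFinv' : ∀ x ∈ Icc (0:ℝ) 1, Finv (F x) = x)
    (v : ℝ) (hv : v ∈ Icc (0:ℝ) 1)
    (qs : ℝ) (hqs : qs ∈ Icc (0:ℝ) 1)
    (hqsmax : IsMaxOn (fun q => (v - Finv q) * q) (Icc 0 1) qs) :
    ∀ q ∈ Icc (0:ℝ) 1,
      (v - Finv qs) * qs - (v - Finv q) * q ≥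
        (1 / 4) * (qs - q) ^ 2 * ((v - Finv qs) * qs) :=
  quantile_utility_quadratic_lower_bound_general F f Finv hderiv hF0 hF1 hlogconcave hFinv hFinv' v
    hv qs hqs hqsmax
end

section
/- Let α, β > 0 with α + β < αβ, and let F be the CDF of the Beta(α, β) distribution with density f(x) = x^{α−1}(1−x)^{β−1}/B(α,β). Then F is strictly log-concave on (0,1): the ratio f(x)/F(x) is strictly decreasing on (0,1). Equivalently, f'(x)F(x) − f(x)² < 0 for all x ∈ (0,1). -/
open Set intervalIntegral

/-!
Write `f = x^(α-1) (1-x)^(β-1) / B(α,β)`, so that `f' = f h` with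
`h x = (α-1)/x - (β-1)/(1-x)`, strictly decreasing because `α, β > 1` (which follows from
`α + β < αβ`). For fixed `x`, the function `Φ u = f u - h x F u` has derivative
`f u (h u - h x) > 0` on `(0, x)` and `Φ 0 = f 0 ≥ 0`, hence `h x F x < f x`. This is exactly
`f' F - f² = f (h F - f) < 0`, which is also the sign of `(f / F)'`.
-/

lemma one_lt_of_add_lt_mul {α β : ℝ} (hα : 0 < α) (hβ : 0 < β) (h : α + β < α * β) :
    1 < α := by
  nlinarith

/-- The logarithmic derivative of `x ^ (α - 1) * (1 - x) ^ (β - 1)`. -/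
noncomputable def betaLogDeriv (α β x : ℝ) : ℝ := (α - 1) / x - (β - 1) / (1 - x)

noncomputable def betaDensity (α β x : ℝ) : ℝ :=
  x ^ (α - 1) * (1 - x) ^ (β - 1) / (Real.Gamma α * Real.Gamma β / Real.Gamma (α + β))

lemma betaLogDeriv_lt {α β u x : ℝ} (hα : 1 ≤ α) (hβ : 1 < β) (hu : 0 < u) (hux : u < x)
    (hx : x < 1) : betaLogDeriv α β x < betaLogDeriv α β u := by
  have h₁ : (α - 1) / x ≤ (α - 1) / u := div_le_div_of_nonneg_left (by linarith) hu hux.le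
  have h₂ : (β - 1) / (1 - u) < (β - 1) / (1 - x) :=
    div_lt_div_of_pos_left (by linarith) (by linarith) (by linarith)
  unfold betaLogDeriv
  linarith

lemma betaDensity_nonneg {α β x : ℝ} (hα : 0 < α) (hβ : 0 < β) (hx₀ : 0 ≤ x) (hx₁ : x ≤ 1) :
    0 ≤ betaDensity α β x := by
  have : 0 ≤ 1 - x := by linarith
  have := Real.Gamma_pos_of_pos hα
  have := Real.Gamma_pos_of_pos hβ
  have := Real.Gamma_pos_of_pos (add_pos hα hβ)
  unfold betaDensity
  positivity

lemma betaDensity_pos {α β x : ℝ} (hα : 0 < α) (hβ : 0 < β) (hx : x ∈ Ioo 0 1) :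
    0 < betaDensity α β x := by
  have : 0 < x := hx.1
  have : 0 < 1 - x := by linarith [hx.2]
  have := Real.Gamma_pos_of_pos hα
  have := Real.Gamma_pos_of_pos hβ
  have := Real.Gamma_pos_of_pos (add_pos hα hβ)
  unfold betaDensity
  positivity

lemma continuous_betaDensity {α β : ℝ} (hα : 1 ≤ α) (hβ : 1 ≤ β) :
    Continuous (betaDensity α β) :=
  ((Real.continuous_rpow_const (by linarith)).mul
    ((Real.continuous_rpow_const (by linarith)).comp (continuous_const.sub continuous_id))).div_const _

lemma hasDerivAt_betaDensity (α β : ℝ) {x : ℝ} (hx : x ∈ Ioo 0 1) :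
    HasDerivAt (betaDensity α β) (betaDensity α β x * betaLogDeriv α β x) x := by
  have hx₀ : x ≠ 0 := hx.1.ne'
  have hx₁ : 1 - x ≠ 0 := by linarith [hx.2]
  have d₁ := Real.hasDerivAt_rpow_const (p := α - 1) (Or.inl hx₀)
  have d₂ := ((hasDerivAt_id x).const_sub 1).rpow_const (p := β - 1) (Or.inl hx₁)
  have d : HasDerivAt (betaDensity α β) (((α - 1) * x ^ (α - 1 - 1) * (1 - x) ^ (β - 1) +
      x ^ (α - 1) * (-1 * (β - 1) * (1 - x) ^ (β - 1 - 1))) /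
        (Real.Gamma α * Real.Gamma β / Real.Gamma (α + β))) x :=
    (d₁.mul d₂).div_const _
  convert d using 1
  simp only [betaDensity, betaLogDeriv, Real.rpow_sub_one hx₀, Real.rpow_sub_one hx₁]
  field_simp
  ring

lemma mul_lt_of_hasDerivAt_mul {f F h : ℝ → ℝ} {a x : ℝ} (hax : a < x)
    (hf : ContinuousOn f (Icc a x)) (hF : ContinuousOn F (Icc a x)) (hfa : 0 ≤ f a)
    (hFa : F a = 0) (hFd : ∀ u ∈ Ioo a x, HasDerivAt F (f u) u)
    (hfd : ∀ u ∈ Ioo a x, HasDerivAt f (f u * h u) u) (hpos : ∀ u ∈ Ioo a x, 0 < f u)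
    (hh : ∀ u ∈ Ioo a x, h x < h u) : h x * F x < f x := by
  have hmono : StrictMonoOn (fun u => f u - h x * F u) (Icc a x) := by
    refine strictMonoOn_of_deriv_pos (convex_Icc a x) (hf.sub (hF.const_smul (h x))) ?_
    intro u hu
    rw [interior_Icc] at hu
    have hd : HasDerivAt (fun u => f u - h x * F u) (f u * h u - h x * f u) u :=
      (hfd u hu).sub ((hFd u hu).const_mul (h x))
    rw [hd.deriv]
    nlinarith [hpos u hu, hh u hu]
  have := hmono (left_mem_Icc.2 hax.le) (right_mem_Icc.2 hax.le) hax
  simp only [hFa, mul_zero, sub_zero] at this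
  linarith

lemma strictAntiOn_div_of_hasDerivAt_mul {f F h : ℝ → ℝ} {s : Set ℝ} (hs : Convex ℝ s)
    (hFd : ∀ x ∈ s, HasDerivAt F (f x) x) (hfd : ∀ x ∈ s, HasDerivAt f (f x * h x) x)
    (hfpos : ∀ x ∈ s, 0 < f x) (hFpos : ∀ x ∈ s, 0 < F x) (hlt : ∀ x ∈ s, h x * F x < f x) :
    StrictAntiOn (fun x => f x / F x) s := by
  refine strictAntiOn_of_deriv_neg hs
    (fun x hx => ((hfd x hx).continuousAt.div (hFd x hx).continuousAt
      (hFpos x hx).ne').continuousWithinAt) fun x hx => ?_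
  have hx := interior_subset hx
  have hd : HasDerivAt (fun x => f x / F x) ((f x * h x * F x - f x * f x) / F x ^ 2) x :=
    (hfd x hx).div (hFd x hx) (hFpos x hx).ne'
  rw [hd.deriv]
  have := hfpos x hx
  have := hlt x hx
  exact div_neg_of_neg_of_pos (by nlinarith) (pow_pos (hFpos x hx) 2)

/-- the Beta(α, β) distribution with `α + β < α * β` is strictly
log-concave: `f / F` is strictly decreasing on `(0,1)`, equivalently
`f' x * F x - f x ^ 2 < 0` on `(0,1)`. -/
theorem beta_strictly_logconcave
    (α β : ℝ) (hα : 0 < α) (hβ : 0 < β) (hcond : α + β < α * β)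
    (f F : ℝ → ℝ)
    (hf : ∀ x, f x =
      x ^ (α - 1) * (1 - x) ^ (β - 1) /
        (Real.Gamma α * Real.Gamma β / Real.Gamma (α + β)))
    (hF : ∀ x, F x = ∫ u in (0:ℝ)..x, f u) :
    StrictAntiOn (fun x => f x / F x) (Ioo 0 1) ∧
      ∀ x ∈ Ioo (0:ℝ) 1, deriv f x * F x - f x ^ 2 < 0 := by
  have hα₁ : 1 < α := one_lt_of_add_lt_mul hα hβ hcond
  have hβ₁ : 1 < β := one_lt_of_add_lt_mul hβ hα (by linarith)
  obtain rfl : f = betaDensity α β := funext hf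
  have hfc := continuous_betaDensity hα₁.le hβ₁.le
  have hFd (x : ℝ) : HasDerivAt F (betaDensity α β x) x := by
    rw [show F = _ from funext hF]
    exact (hfc.integral_hasStrictDerivAt 0 x).hasDerivAt
  have hFpos (x : ℝ) (hx : x ∈ Ioo (0:ℝ) 1) : 0 < F x :=
    hF x ▸ intervalIntegral_pos_of_pos_on (hfc.intervalIntegrable 0 x)
      (fun u hu => betaDensity_pos hα hβ ⟨hu.1, hu.2.trans hx.2⟩) hx.1
  have hlt (x : ℝ) (hx : x ∈ Ioo (0:ℝ) 1) : betaLogDeriv α β x * F x < betaDensity α β x := by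
    have hsub (u : ℝ) (hu : u ∈ Ioo 0 x) : u ∈ Ioo (0:ℝ) 1 := ⟨hu.1, hu.2.trans hx.2⟩
    refine mul_lt_of_hasDerivAt_mul hx.1 hfc.continuousOn
      (HasDerivAt.continuousOn fun u _ => hFd u) (betaDensity_nonneg hα hβ le_rfl zero_le_one)
      (by simp [hF]) (fun u _ => hFd u) (fun u hu => hasDerivAt_betaDensity α β (hsub u hu))
      (fun u hu => betaDensity_pos hα hβ (hsub u hu))
      (fun u hu => betaLogDeriv_lt hα₁.le hβ₁ hu.1 hu.2 hx.2)
  refine ⟨strictAntiOn_div_of_hasDerivAt_mul (convex_Ioo 0 1) (fun x _ => hFd x)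
    (fun x hx => hasDerivAt_betaDensity α β hx) (fun x hx => betaDensity_pos hα hβ hx) hFpos hlt,
    fun x hx => ?_⟩
  rw [(hasDerivAt_betaDensity α β hx).deriv]
  nlinarith [hlt x hx, betaDensity_pos hα hβ hx]
end
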